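/- (Hessian–vorticity estimate.) Let 0<L_s≤∞ and let u=(u₁,u₂) be a smooth vector field on ℝ×[0,1], Γ-periodic in x₁, with ∇·u=0 in Ω, u₂=0 at x₂∈{0,1}, ∂₂u₁ = −L_s⁻¹·u₁ at x₂=1 and ∂₂u₁ = L_s⁻¹·u₁ at x₂=0 (for L_s=∞: ∂₂u₁=0 at x₂∈{0,1}). Then ‖∇²u‖_{L²(Ω)} ≤ ‖∇ω‖_{L²(Ω)}, where ω = ∂₁u₂ − ∂₂u₁ and ∇²u is the tensor of all second derivatives of u. -/

import Mathlib

noncomputable section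
open MeasureTheory Filter Set
open scoped ENNReal

namespace RB

/-- A time-dependent scalar field: arguments t, x₁, x₂. -/
abbrev TField := ℝ → ℝ → ℝ → ℝ
/-- A static scalar field: arguments x₁, x₂. -/
abbrev SField := ℝ → ℝ → ℝ

def tsmooth (f : TField) : Prop :=
  ContDiff ℝ (⊤ : ℕ∞) (fun q : ℝ × ℝ × ℝ => f q.1 q.2.1 q.2.2)
def ssmooth (f : SField) : Prop :=
  ContDiff ℝ (⊤ : ℕ∞) (fun q : ℝ × ℝ => f q.1 q.2)
def tperiodic (Γ : ℝ) (f : TField) : Prop := ∀ t x1 x2, f t (x1 + Γ) x2 = f t x1 x2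
def speriodic (Γ : ℝ) (f : SField) : Prop := ∀ x1 x2, f (x1 + Γ) x2 = f x1 x2

/-- time derivative -/
def dt (f : TField) : TField := fun t x1 x2 => deriv (fun s => f s x1 x2) t
/-- partial derivative in x₁ (time-dependent field) -/
def d1 (f : TField) : TField := fun t x1 x2 => deriv (fun y => f t y x2) x1
/-- partial derivative in x₂ (time-dependent field) -/
def d2 (f : TField) : TField := fun t x1 x2 => deriv (fun y => f t x1 y) x2
/-- partial derivative in x₁ (static field) -/
def q1 (f : SField) : SField := fun x1 x2 => deriv (fun y => f y x2) x1
/-- partial derivative in x₂ (static field) -/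
def q2 (f : SField) : SField := fun x1 x2 => deriv (fun y => f x1 y) x2

/-- Integral over Ω = [0,Γ]×[0,1]. -/
def intΩ (Γ : ℝ) (g : SField) : ℝ :=
  ∫ x1 in Ioc (0:ℝ) Γ, ∫ x2 in Ioc (0:ℝ) 1, g x1 x2

/-- Long-time horizontal average ⟨f⟩ of a quantity f(t, x₁). -/
def ltavg (Γ : ℝ) (f : ℝ → ℝ → ℝ) : ℝ :=
  limsup (fun t => (1/t) * ∫ s in Ioc (0:ℝ) t, (1/Γ) * ∫ x1 in Ioc (0:ℝ) Γ, f s x1) atTop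

/-- spatial L² norm of a static scalar field over Ω -/
def sL2 (Γ : ℝ) (f : SField) : ℝ := Real.sqrt (intΩ Γ (fun x1 x2 => f x1 x2 ^ 2))
/-- spatial L^r norm of a static scalar field over Ω -/
def sLr (Γ r : ℝ) (f : SField) : ℝ := (intΩ Γ (fun x1 x2 => |f x1 x2| ^ r)) ^ (1/r)
/-- H¹ norm of a static scalar field over Ω -/
def sH1 (Γ : ℝ) (f : SField) : ℝ :=
  Real.sqrt (intΩ Γ (fun x1 x2 => f x1 x2 ^ 2 + q1 f x1 x2 ^ 2 + q2 f x1 x2 ^ 2))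

/-- A classical solution of the Boussinesq system on Ω = [0,Γ]×[0,1] with
Rayleigh number Ra, Prandtl number Pr, slip length Ls ∈ (0,∞]
(Navier-slip with friction coefficient `(Ls⁻¹).toReal`; for Ls = ∞ this is free-slip). -/
structure Sol (Γ Ra Pr : ℝ) (Ls : ℝ≥0∞) where
  u1 : TField
  u2 : TField
  T : TField
  p : TField
  smooth_u1 : tsmooth u1
  smooth_u2 : tsmooth u2
  smooth_T : tsmooth T
  smooth_p : tsmooth p
  periodic_u1 : tperiodic Γ u1
  periodic_u2 : tperiodic Γ u2
  periodic_T : tperiodic Γ T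
  periodic_p : tperiodic Γ p
  momentum1 : ∀ t x1 x2, 0 ≤ t → x2 ∈ Icc (0:ℝ) 1 →
    Pr⁻¹ * (dt u1 t x1 x2 + u1 t x1 x2 * d1 u1 t x1 x2 + u2 t x1 x2 * d2 u1 t x1 x2)
      - (d1 (d1 u1) t x1 x2 + d2 (d2 u1) t x1 x2) + d1 p t x1 x2 = 0
  momentum2 : ∀ t x1 x2, 0 ≤ t → x2 ∈ Icc (0:ℝ) 1 →
    Pr⁻¹ * (dt u2 t x1 x2 + u1 t x1 x2 * d1 u2 t x1 x2 + u2 t x1 x2 * d2 u2 t x1 x2)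
      - (d1 (d1 u2) t x1 x2 + d2 (d2 u2) t x1 x2) + d2 p t x1 x2 = Ra * T t x1 x2
  incomp : ∀ t x1 x2, 0 ≤ t → x2 ∈ Icc (0:ℝ) 1 →
    d1 u1 t x1 x2 + d2 u2 t x1 x2 = 0
  heat : ∀ t x1 x2, 0 ≤ t → x2 ∈ Icc (0:ℝ) 1 →
    dt T t x1 x2 + u1 t x1 x2 * d1 T t x1 x2 + u2 t x1 x2 * d2 T t x1 x2
      - (d1 (d1 T) t x1 x2 + d2 (d2 T) t x1 x2) = 0
  T_bot : ∀ t x1, 0 ≤ t → T t x1 0 = 1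
  T_top : ∀ t x1, 0 ≤ t → T t x1 1 = 0
  u2_bot : ∀ t x1, 0 ≤ t → u2 t x1 0 = 0
  u2_top : ∀ t x1, 0 ≤ t → u2 t x1 1 = 0
  slip_top : ∀ t x1, 0 ≤ t → d2 u1 t x1 1 = -(Ls⁻¹).toReal * u1 t x1 1
  slip_bot : ∀ t x1, 0 ≤ t → d2 u1 t x1 0 = (Ls⁻¹).toReal * u1 t x1 0

variable {Γ Ra Pr : ℝ} {Ls : ℝ≥0∞}

/-- The Nusselt number Nu = ⟨∫₀¹ (u₂T − ∂₂T) dx₂⟩. -/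
def Nu (S : Sol Γ Ra Pr Ls) : ℝ :=
  ltavg Γ (fun t x1 => ∫ x2 in (0:ℝ)..1, (S.u2 t x1 x2 * S.T t x1 x2 - d2 S.T t x1 x2))

/-- The initial temperature satisfies 0 ≤ T₀ ≤ 1 on Ω. -/
def T0cond (S : Sol Γ Ra Pr Ls) : Prop :=
  ∀ x1 x2, x2 ∈ Icc (0:ℝ) 1 → S.T 0 x1 x2 ∈ Icc (0:ℝ) 1

/-- The vorticity ω = ∂₁u₂ − ∂₂u₁. -/
def vort (S : Sol Γ Ra Pr Ls) : TField :=
  fun t x1 x2 => d1 S.u2 t x1 x2 - d2 S.u1 t x1 x2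

/-- |∇u|² pointwise. -/
def gradSq (S : Sol Γ Ra Pr Ls) : TField := fun t x1 x2 =>
  d1 S.u1 t x1 x2 ^ 2 + d2 S.u1 t x1 x2 ^ 2 + d1 S.u2 t x1 x2 ^ 2 + d2 S.u2 t x1 x2 ^ 2

/-- |∇²u|² pointwise: sum of squares of all second spatial derivatives of u. -/
def hessSq (S : Sol Γ Ra Pr Ls) : TField := fun t x1 x2 =>
  d1 (d1 S.u1) t x1 x2 ^ 2 + d1 (d2 S.u1) t x1 x2 ^ 2 +
  d2 (d1 S.u1) t x1 x2 ^ 2 + d2 (d2 S.u1) t x1 x2 ^ 2 +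
  d1 (d1 S.u2) t x1 x2 ^ 2 + d1 (d2 S.u2) t x1 x2 ^ 2 +
  d2 (d1 S.u2) t x1 x2 ^ 2 + d2 (d2 S.u2) t x1 x2 ^ 2

/-- ‖u(t)‖_{L²}. -/
def uL2 (S : Sol Γ Ra Pr Ls) (t : ℝ) : ℝ :=
  Real.sqrt (intΩ Γ (fun x1 x2 => S.u1 t x1 x2 ^ 2 + S.u2 t x1 x2 ^ 2))

/-- ‖u₀‖_{W^{1,4}}. -/
def W14u0 (S : Sol Γ Ra Pr Ls) : ℝ :=
  (intΩ Γ (fun x1 x2 =>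
    (S.u1 0 x1 x2 ^ 2 + S.u2 0 x1 x2 ^ 2) ^ 2 + (gradSq S 0 x1 x2) ^ 2)) ^ ((1:ℝ)/4)

/-- ‖ω(t)‖_{L⁴}. -/
def omegaL4 (S : Sol Γ Ra Pr Ls) (t : ℝ) : ℝ :=
  (intΩ Γ (fun x1 x2 => vort S t x1 x2 ^ 4)) ^ ((1:ℝ)/4)


/-!
Incompressibility identifies `∇ω` with the Laplacian of `u`, rotated by a right angle, and
`|Δv|² - |∇²v|² = 2 det ∇²v` for every scalar `v`. The Hessian determinant is a divergence,
`∂₁₁v ∂₂₂v - (∂₁₂v)² = ∂₂(∂₂v ∂₁₁v) - ∂₁(∂₂v ∂₁₂v)`, so over the periodic strip its integral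
reduces to the wall term `∫ [∂₂v ∂₁₁v]₀¹ dx₁`. For `u₂` this vanishes because `u₂ = 0` on the
walls; for `u₁` the Navier-slip condition and one more integration by parts in `x₁` turn it into
`L_s⁻¹ ∫ (∂₁u₁)²` over both walls, which is nonnegative.
-/

open Function (uncurry)
open Topology

section PartialDerivatives

variable {f g : SField}

lemma ssmooth.continuous (hf : ssmooth f) : Continuous (uncurry f) :=
  ContDiff.continuous hf

lemma ssmooth.continuous_horizontal (hf : ssmooth f) (x2 : ℝ) : Continuous fun x1 => f x1 x2 :=
  hf.continuous.comp (Continuous.prodMk_left x2)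

lemma ssmooth.continuous_vertical (hf : ssmooth f) (x1 : ℝ) : Continuous fun x2 => f x1 x2 :=
  hf.continuous.comp (Continuous.prodMk_right x1)

lemma ssmooth.hasDerivAt_horizontal (hf : ssmooth f) (x1 x2 : ℝ) :
    HasDerivAt (fun y => f y x2) (fderiv ℝ (uncurry f) (x1, x2) (1, 0)) x1 := by
  have hline : HasDerivAt (fun y : ℝ => (y, x2)) ((1 : ℝ), (0 : ℝ)) x1 :=
    (hasDerivAt_id x1).prodMk (hasDerivAt_const x1 x2)
  exact ((ContDiff.differentiable hf (by simp)) (x1, x2)).hasFDerivAt.comp_hasDerivAt x1 hline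

lemma ssmooth.hasDerivAt_vertical (hf : ssmooth f) (x1 x2 : ℝ) :
    HasDerivAt (fun y => f x1 y) (fderiv ℝ (uncurry f) (x1, x2) (0, 1)) x2 := by
  have hline : HasDerivAt (fun y : ℝ => (x1, y)) ((0 : ℝ), (1 : ℝ)) x2 :=
    (hasDerivAt_const x2 x1).prodMk (hasDerivAt_id x2)
  exact ((ContDiff.differentiable hf (by simp)) (x1, x2)).hasFDerivAt.comp_hasDerivAt x2 hline

lemma ssmooth.q1_eq_fderiv (hf : ssmooth f) :
    q1 f = fun a b => fderiv ℝ (uncurry f) (a, b) (1, 0) :=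
  funext₂ fun a b => (hf.hasDerivAt_horizontal a b).deriv

lemma ssmooth.q2_eq_fderiv (hf : ssmooth f) :
    q2 f = fun a b => fderiv ℝ (uncurry f) (a, b) (0, 1) :=
  funext₂ fun a b => (hf.hasDerivAt_vertical a b).deriv

lemma ssmooth.hasDerivAt_q1 (hf : ssmooth f) (x1 x2 : ℝ) :
    HasDerivAt (fun y => f y x2) (q1 f x1 x2) x1 := by
  rw [hf.q1_eq_fderiv]
  exact hf.hasDerivAt_horizontal x1 x2

lemma ssmooth.hasDerivAt_q2 (hf : ssmooth f) (x1 x2 : ℝ) :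
    HasDerivAt (fun y => f x1 y) (q2 f x1 x2) x2 := by
  rw [hf.q2_eq_fderiv]
  exact hf.hasDerivAt_vertical x1 x2

lemma ssmooth.q1 (hf : ssmooth f) : ssmooth (q1 f) := by
  rw [hf.q1_eq_fderiv]
  exact (ContDiff.fderiv_right hf (WithTop.coe_le_coe.mpr le_top)).clm_apply contDiff_const

lemma ssmooth.q2 (hf : ssmooth f) : ssmooth (q2 f) := by
  rw [hf.q2_eq_fderiv]
  exact (ContDiff.fderiv_right hf (WithTop.coe_le_coe.mpr le_top)).clm_apply contDiff_const

lemma ssmooth.mul (hf : ssmooth f) (hg : ssmooth g) : ssmooth (fun a b => f a b * g a b) :=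
  ContDiff.mul hf hg

lemma q1_q2_comm (hf : ssmooth f) : q1 (q2 f) = q2 (q1 f) := by
  funext x1 x2
  set F := uncurry f
  have hF : ContDiff ℝ (⊤ : ℕ∞) F := hf
  have hF' : Differentiable ℝ (fderiv ℝ F) :=
    (hF.fderiv_right (m := 1) (WithTop.coe_le_coe.mpr le_top)).differentiable one_ne_zero
  have hsecond : ∀ v w : ℝ × ℝ,
      fderiv ℝ (fun p => fderiv ℝ F p v) (x1, x2) w = fderiv ℝ (fderiv ℝ F) (x1, x2) w v := by
    intro v w
    rw [fderiv_clm_apply (hF' _) (differentiableAt_const v)]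
    simp
  have hsymm : IsSymmSndFDerivAt ℝ F (x1, x2) :=
    hF.contDiffAt.isSymmSndFDerivAt (by rw [minSmoothness_of_isRCLikeNormedField]; norm_cast)
  rw [hf.q2.q1_eq_fderiv, hf.q1.q2_eq_fderiv, hf.q2_eq_fderiv, hf.q1_eq_fderiv]
  exact (hsecond (0, 1) (1, 0)).trans ((hsymm _ _).trans (hsecond (1, 0) (0, 1)).symm)

lemma q1_sub (hf : ssmooth f) (hg : ssmooth g) (x1 x2 : ℝ) :
    q1 (fun a b => f a b - g a b) x1 x2 = q1 f x1 x2 - q1 g x1 x2 :=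
  ((hf.hasDerivAt_q1 x1 x2).sub (hg.hasDerivAt_q1 x1 x2)).deriv

lemma q2_sub (hf : ssmooth f) (hg : ssmooth g) (x1 x2 : ℝ) :
    q2 (fun a b => f a b - g a b) x1 x2 = q2 f x1 x2 - q2 g x1 x2 :=
  ((hf.hasDerivAt_q2 x1 x2).sub (hg.hasDerivAt_q2 x1 x2)).deriv

lemma q1_mul (hf : ssmooth f) (hg : ssmooth g) (x1 x2 : ℝ) :
    q1 (fun a b => f a b * g a b) x1 x2 = q1 f x1 x2 * g x1 x2 + f x1 x2 * q1 g x1 x2 :=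
  ((hf.hasDerivAt_q1 x1 x2).mul (hg.hasDerivAt_q1 x1 x2)).deriv

lemma q2_mul (hf : ssmooth f) (hg : ssmooth g) (x1 x2 : ℝ) :
    q2 (fun a b => f a b * g a b) x1 x2 = q2 f x1 x2 * g x1 x2 + f x1 x2 * q2 g x1 x2 :=
  ((hf.hasDerivAt_q2 x1 x2).mul (hg.hasDerivAt_q2 x1 x2)).deriv

end PartialDerivatives

section Periodicity

variable {Γ : ℝ} {f g : SField}

lemma speriodic.q1 (hf : speriodic Γ f) : speriodic Γ (q1 f) := by
  intro x1 x2
  show deriv (fun y => f y x2) (x1 + Γ) = deriv (fun y => f y x2) x1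
  rw [← deriv_comp_add_const]
  simp only [hf _ x2]

lemma speriodic.q2 (hf : speriodic Γ f) : speriodic Γ (q2 f) := by
  intro x1 x2
  simp only [RB.q2, hf x1]

lemma speriodic.mul (hf : speriodic Γ f) (hg : speriodic Γ g) :
    speriodic Γ (fun a b => f a b * g a b) := by
  intro x1 x2
  simp only [hf x1 x2, hg x1 x2]

end Periodicity

section Integrals

variable {Γ : ℝ} {f g : SField}

lemma integral_q1_eq_zero_of_speriodic (hf : ssmooth f) (hp : speriodic Γ f) (x2 : ℝ) :
    ∫ x1 in Ioc (0 : ℝ) Γ, q1 f x1 x2 = 0 := by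
  rcases le_or_gt 0 Γ with hΓ | hΓ
  · rw [← intervalIntegral.integral_of_le hΓ]
    refine (intervalIntegral.integral_deriv_eq_sub
      (fun x _ => (hf.hasDerivAt_q1 x x2).differentiableAt)
      ((hf.q1.continuous_horizontal x2).intervalIntegrable 0 Γ)).trans ?_
    exact sub_eq_zero.mpr (by simpa using hp 0 x2)
  · rw [Ioc_eq_empty_of_le hΓ.le, Measure.restrict_empty, integral_zero_measure]

lemma integral_q2_eq_sub (hf : ssmooth f) (x1 : ℝ) :
    ∫ x2 in Ioc (0 : ℝ) 1, q2 f x1 x2 = f x1 1 - f x1 0 := by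
  rw [← intervalIntegral.integral_of_le zero_le_one]
  exact intervalIntegral.integral_deriv_eq_sub
    (fun x _ => (hf.hasDerivAt_q2 x1 x).differentiableAt)
    ((hf.q2.continuous_vertical x1).intervalIntegrable 0 1)

lemma integral_mul_q1_q1_of_speriodic (hf : ssmooth f) (hp : speriodic Γ f) (x2 : ℝ) :
    ∫ x1 in Ioc (0 : ℝ) Γ, f x1 x2 * q1 (q1 f) x1 x2 = -∫ x1 in Ioc (0 : ℝ) Γ, q1 f x1 x2 ^ 2 := by
  have hprod : ∀ x1, f x1 x2 * q1 (q1 f) x1 x2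
      = q1 (fun a b => f a b * q1 f a b) x1 x2 - q1 f x1 x2 ^ 2 := fun x1 => by
    rw [q1_mul hf hf.q1]; ring
  simp only [hprod]
  rw [integral_sub, integral_q1_eq_zero_of_speriodic (hf.mul hf.q1) (hp.mul hp.q1), zero_sub]
  · exact ((hf.mul hf.q1).q1.continuous_horizontal x2).integrableOn_Ioc
  · exact ((hf.q1.continuous_horizontal x2).pow 2).integrableOn_Ioc

end Integrals

section IntegralOverΩ

variable {Γ : ℝ} {g h : SField}

lemma integrable_uncurry_of_continuous (hg : Continuous (uncurry g)) :
    Integrable (uncurry g)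
      ((volume.restrict (Ioc (0 : ℝ) Γ)).prod (volume.restrict (Ioc (0 : ℝ) 1))) := by
  rw [Measure.prod_restrict, ← Measure.volume_eq_prod]
  exact (hg.continuousOn.integrableOn_compact (isCompact_Icc.prod isCompact_Icc)).mono_set
    (prod_mono Ioc_subset_Icc_self Ioc_subset_Icc_self)

lemma intΩ_add (hg : Continuous (uncurry g)) (hh : Continuous (uncurry h)) :
    intΩ Γ (fun a b => g a b + h a b) = intΩ Γ g + intΩ Γ h :=
  integral_integral_add (integrable_uncurry_of_continuous hg)
    (integrable_uncurry_of_continuous hh)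

lemma intΩ_sub (hg : Continuous (uncurry g)) (hh : Continuous (uncurry h)) :
    intΩ Γ (fun a b => g a b - h a b) = intΩ Γ g - intΩ Γ h :=
  integral_integral_sub (integrable_uncurry_of_continuous hg)
    (integrable_uncurry_of_continuous hh)

lemma intΩ_const_mul (c : ℝ) (g : SField) : intΩ Γ (fun a b => c * g a b) = c * intΩ Γ g := by
  simp only [intΩ, integral_const_mul]

lemma intΩ_eq_integral_integral_swap (hg : Continuous (uncurry g)) :
    intΩ Γ g = ∫ x2 in Ioc (0 : ℝ) 1, ∫ x1 in Ioc (0 : ℝ) Γ, g x1 x2 :=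
  integral_integral_swap (integrable_uncurry_of_continuous hg)

lemma intΩ_congr_of_mem_Ioo (hgh : ∀ a b, b ∈ Ioo (0 : ℝ) 1 → g a b = h a b) :
    intΩ Γ g = intΩ Γ h := by
  refine integral_congr_ae (ae_of_all _ fun a => ?_)
  simp only [integral_Ioc_eq_integral_Ioo]
  exact setIntegral_congr_fun measurableSet_Ioo (hgh a)

end IntegralOverΩ

def hessDet (v : SField) : SField := fun a b => q1 (q1 v) a b * q2 (q2 v) a b - q1 (q2 v) a b ^ 2

section HessianDeterminant

variable {Γ : ℝ} {v : SField}

lemma continuous_hessDet (hv : ssmooth v) : Continuous (uncurry (hessDet v)) :=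
  (hv.q1.q1.continuous.mul hv.q2.q2.continuous).sub (hv.q2.q1.continuous.pow 2)

lemma hessDet_eq_q2_sub_q1 (hv : ssmooth v) (a b : ℝ) :
    hessDet v a b = q2 (fun a b => q2 v a b * q1 (q1 v) a b) a b
      - q1 (fun a b => q2 v a b * q1 (q2 v) a b) a b := by
  have hmixed : q1 (q1 (q2 v)) = q2 (q1 (q1 v)) := by
    rw [q1_q2_comm hv, q1_q2_comm hv.q1]
  rw [hessDet, q2_mul hv.q2 hv.q1.q1, q1_mul hv.q2 hv.q2.q1, hmixed]
  ring

lemma intΩ_hessDet (hv : ssmooth v) (hp : speriodic Γ v) :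
    intΩ Γ (hessDet v) = ∫ x1 in Ioc (0 : ℝ) Γ,
      (q2 v x1 1 * q1 (q1 v) x1 1 - q2 v x1 0 * q1 (q1 v) x1 0) := by
  have hH := hv.q2.mul hv.q1.q1
  have hG := hv.q2.mul hv.q2.q1
  rw [show hessDet v = _ from funext₂ (hessDet_eq_q2_sub_q1 hv),
    intΩ_sub hH.q2.continuous hG.q1.continuous,
    intΩ_eq_integral_integral_swap (g := q1 _) hG.q1.continuous]
  simp only [integral_q1_eq_zero_of_speriodic hG (hp.q2.mul hp.q2.q1), integral_zero, sub_zero]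
  exact integral_congr_ae (ae_of_all _ fun x1 => integral_q2_eq_sub hH x1)

lemma intΩ_hessDet_eq_zero_of_boundary (hv : ssmooth v) (hp : speriodic Γ v)
    (h0 : ∀ x1, v x1 0 = 0) (h1 : ∀ x1, v x1 1 = 0) : intΩ Γ (hessDet v) = 0 := by
  have hwall : ∀ b, (∀ x1, v x1 b = 0) → ∀ x1, q1 (q1 v) x1 b = 0 := by
    intro b hb x1
    have hq1 : (fun y => q1 v y b) = fun _ => 0 := funext fun y => by simp [RB.q1, hb]
    show deriv (fun y => q1 v y b) x1 = 0
    simp [hq1]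
  simp [intΩ_hessDet hv hp, hwall 0 h0, hwall 1 h1]

lemma intΩ_hessDet_of_navierSlip (hv : ssmooth v) (hp : speriodic Γ v) (κ : ℝ)
    (h1 : ∀ x1, q2 v x1 1 = -κ * v x1 1) (h0 : ∀ x1, q2 v x1 0 = κ * v x1 0) :
    intΩ Γ (hessDet v) = κ * ((∫ x1 in Ioc (0 : ℝ) Γ, q1 v x1 1 ^ 2)
      + ∫ x1 in Ioc (0 : ℝ) Γ, q1 v x1 0 ^ 2) := by
  have hwall : ∀ x1, q2 v x1 1 * q1 (q1 v) x1 1 - q2 v x1 0 * q1 (q1 v) x1 0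
      = -κ * (v x1 1 * q1 (q1 v) x1 1 + v x1 0 * q1 (q1 v) x1 0) := fun x1 => by
    rw [h1, h0]; ring
  have hint : ∀ b, IntegrableOn (fun x1 => v x1 b * q1 (q1 v) x1 b) (Ioc 0 Γ) := fun b =>
    ((hv.continuous_horizontal b).mul (hv.q1.q1.continuous_horizontal b)).integrableOn_Ioc
  rw [intΩ_hessDet hv hp]
  simp only [hwall]
  rw [integral_const_mul, integral_add (hint 1) (hint 0),
    integral_mul_q1_q1_of_speriodic hv hp, integral_mul_q1_q1_of_speriodic hv hp]
  ring

end HessianDeterminant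

def curl (u1 u2 : SField) : SField := fun x1 x2 => q1 u2 x1 x2 - q2 u1 x1 x2

def gradNormSq (f : SField) : SField := fun x1 x2 => q1 f x1 x2 ^ 2 + q2 f x1 x2 ^ 2

def hessNormSq (u1 u2 : SField) : SField := fun x1 x2 =>
  q1 (q1 u1) x1 x2 ^ 2 + q1 (q2 u1) x1 x2 ^ 2 +
  q2 (q1 u1) x1 x2 ^ 2 + q2 (q2 u1) x1 x2 ^ 2 +
  q1 (q1 u2) x1 x2 ^ 2 + q1 (q2 u2) x1 x2 ^ 2 +
  q2 (q1 u2) x1 x2 ^ 2 + q2 (q2 u2) x1 x2 ^ 2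

section Vorticity

variable {Γ : ℝ} {u1 u2 : SField}

lemma continuous_hessNormSq (hu1 : ssmooth u1) (hu2 : ssmooth u2) :
    Continuous (uncurry (hessNormSq u1 u2)) :=
  (((((((hu1.q1.q1.continuous.pow 2).add (hu1.q2.q1.continuous.pow 2)).add
    (hu1.q1.q2.continuous.pow 2)).add (hu1.q2.q2.continuous.pow 2)).add
    (hu2.q1.q1.continuous.pow 2)).add (hu2.q2.q1.continuous.pow 2)).add
    (hu2.q1.q2.continuous.pow 2)).add (hu2.q2.q2.continuous.pow 2)

lemma gradNormSq_curl_eq (hu1 : ssmooth u1) (hu2 : ssmooth u2)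
    (hdiv : ∀ x1 x2, x2 ∈ Icc (0 : ℝ) 1 → q1 u1 x1 x2 + q2 u2 x1 x2 = 0)
    (a : ℝ) {b : ℝ} (hb : b ∈ Ioo (0 : ℝ) 1) :
    gradNormSq (curl u1 u2) a b
      = hessNormSq u1 u2 a b + 2 * hessDet u1 a b + 2 * hessDet u2 a b := by
  have hdiv_q1 : q1 (q2 u2) a b = -q1 (q1 u1) a b := by
    have hline : (fun y => q2 u2 y b) = fun y => -q1 u1 y b :=
      funext fun y => eq_neg_of_add_eq_zero_right (hdiv y b (Ioo_subset_Icc_self hb))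
    show deriv (fun y => q2 u2 y b) a = -deriv (fun y => q1 u1 y b) a
    rw [hline]
    exact deriv.neg
  have hdiv_q2 : q2 (q1 u1) a b = -q2 (q2 u2) a b := by
    have hline : (fun y => q1 u1 a y) =ᶠ[𝓝 b] fun y => -q2 u2 a y := by
      filter_upwards [Icc_mem_nhds hb.1 hb.2] with y hy
      exact eq_neg_of_add_eq_zero_left (hdiv a y hy)
    show deriv (fun y => q1 u1 a y) b = -deriv (fun y => q2 u2 a y) b
    rw [hline.deriv_eq]
    exact deriv.neg
  have hcurl_q1 : q1 (curl u1 u2) a b = q1 (q1 u2) a b - q1 (q2 u1) a b :=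
    q1_sub hu2.q1 hu1.q2 a b
  have hcurl_q2 : q2 (curl u1 u2) a b = q2 (q1 u2) a b - q2 (q2 u1) a b :=
    q2_sub hu2.q1 hu1.q2 a b
  simp only [gradNormSq, hessNormSq, hessDet, hcurl_q1, hcurl_q2, q1_q2_comm hu1, q1_q2_comm hu2]
  rw [hdiv_q2, ← q1_q2_comm hu2, hdiv_q1]
  ring

lemma intΩ_gradNormSq_curl (hu1 : ssmooth u1) (hu2 : ssmooth u2)
    (hdiv : ∀ x1 x2, x2 ∈ Icc (0 : ℝ) 1 → q1 u1 x1 x2 + q2 u2 x1 x2 = 0) :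
    intΩ Γ (gradNormSq (curl u1 u2)) = intΩ Γ (hessNormSq u1 u2)
      + 2 * intΩ Γ (hessDet u1) + 2 * intΩ Γ (hessDet u2) := by
  have hD1 : Continuous (uncurry fun a b => 2 * hessDet u1 a b) :=
    continuous_const.mul (continuous_hessDet hu1)
  have hD2 : Continuous (uncurry fun a b => 2 * hessDet u2 a b) :=
    continuous_const.mul (continuous_hessDet hu2)
  have hA : Continuous (uncurry fun a b => hessNormSq u1 u2 a b + 2 * hessDet u1 a b) :=
    (continuous_hessNormSq hu1 hu2).add hD1
  rw [intΩ_congr_of_mem_Ioo fun a _ hb => gradNormSq_curl_eq hu1 hu2 hdiv a hb,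
    intΩ_add hA hD2, intΩ_add (continuous_hessNormSq hu1 hu2) hD1, intΩ_const_mul, intΩ_const_mul]

end Vorticity

theorem hessian_vorticity_estimate_general (Γ : ℝ) (Ls : ℝ≥0∞)
    (u1 u2 : SField) (hu1 : ssmooth u1) (hu2 : ssmooth u2)
    (hpu1 : speriodic Γ u1) (hpu2 : speriodic Γ u2)
    (hinc : ∀ x1 x2, x2 ∈ Icc (0:ℝ) 1 → q1 u1 x1 x2 + q2 u2 x1 x2 = 0)
    (hb0 : ∀ x1, u2 x1 0 = 0) (hb1 : ∀ x1, u2 x1 1 = 0)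
    (hs1 : ∀ x1, q2 u1 x1 1 = -(Ls⁻¹).toReal * u1 x1 1)
    (hs0 : ∀ x1, q2 u1 x1 0 = (Ls⁻¹).toReal * u1 x1 0) :
    Real.sqrt (intΩ Γ (fun x1 x2 =>
      q1 (q1 u1) x1 x2 ^ 2 + q1 (q2 u1) x1 x2 ^ 2 +
      q2 (q1 u1) x1 x2 ^ 2 + q2 (q2 u1) x1 x2 ^ 2 +
      q1 (q1 u2) x1 x2 ^ 2 + q1 (q2 u2) x1 x2 ^ 2 +
      q2 (q1 u2) x1 x2 ^ 2 + q2 (q2 u2) x1 x2 ^ 2)) ≤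
    Real.sqrt (intΩ Γ (fun x1 x2 =>
      q1 (fun y1 y2 => q1 u2 y1 y2 - q2 u1 y1 y2) x1 x2 ^ 2 +
      q2 (fun y1 y2 => q1 u2 y1 y2 - q2 u1 y1 y2) x1 x2 ^ 2)) := by
  refine Real.sqrt_le_sqrt ?_
  change intΩ Γ (hessNormSq u1 u2) ≤ intΩ Γ (gradNormSq (curl u1 u2))
  have hwall_u1 : 0 ≤ intΩ Γ (hessDet u1) := by
    rw [intΩ_hessDet_of_navierSlip hu1 hpu1 _ hs1 hs0]
    positivity
  rw [intΩ_gradNormSq_curl hu1 hu2 hinc, intΩ_hessDet_eq_zero_of_boundary hu2 hpu2 hb0 hb1]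
  linarith

/-- Hessian–vorticity estimate ‖∇²u‖_{L²} ≤ ‖∇ω‖_{L²}. -/
theorem hessian_vorticity_estimate (Γ : ℝ) (hΓ : 0 < Γ) (Ls : ℝ≥0∞) (hLs : Ls ≠ 0)
    (u1 u2 : SField) (hu1 : ssmooth u1) (hu2 : ssmooth u2)
    (hpu1 : speriodic Γ u1) (hpu2 : speriodic Γ u2)
    (hinc : ∀ x1 x2, x2 ∈ Icc (0:ℝ) 1 → q1 u1 x1 x2 + q2 u2 x1 x2 = 0)
    (hb0 : ∀ x1, u2 x1 0 = 0) (hb1 : ∀ x1, u2 x1 1 = 0)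
    (hs1 : ∀ x1, q2 u1 x1 1 = -(Ls⁻¹).toReal * u1 x1 1)
    (hs0 : ∀ x1, q2 u1 x1 0 = (Ls⁻¹).toReal * u1 x1 0) :
    Real.sqrt (intΩ Γ (fun x1 x2 =>
      q1 (q1 u1) x1 x2 ^ 2 + q1 (q2 u1) x1 x2 ^ 2 +
      q2 (q1 u1) x1 x2 ^ 2 + q2 (q2 u1) x1 x2 ^ 2 +
      q1 (q1 u2) x1 x2 ^ 2 + q1 (q2 u2) x1 x2 ^ 2 +
      q2 (q1 u2) x1 x2 ^ 2 + q2 (q2 u2) x1 x2 ^ 2)) ≤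
    Real.sqrt (intΩ Γ (fun x1 x2 =>
      q1 (fun y1 y2 => q1 u2 y1 y2 - q2 u1 y1 y2) x1 x2 ^ 2 +
      q2 (fun y1 y2 => q1 u2 y1 y2 - q2 u1 y1 y2) x1 x2 ^ 2)) :=
  hessian_vorticity_estimate_general Γ Ls u1 u2 hu1 hu2 hpu1 hpu2 hinc hb0 hb1 hs1 hs0

end RB
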